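/- The function 𝔐 is strictly decreasing on (-∞, 0): if λ₁ < λ₂ < 0 then 𝔐(λ₂) < 𝔐(λ₁). -/

import Mathlib

/-!
Along a solution, `φ' = -λ · Φ` with the flux `Φ(w) = (∫₀^w φ U²) / U(w)²` (`rayleighFlux U φ`),
which is nonnegative wherever `φ ≥ 0` on `[0, w]`. A first-passage argument therefore gives
`φ ≥ 1` for `λ ≤ 0`. The flux is linear in `φ`, so `φ_{λ₁} - φ_{λ₂}` is the integral of the flux
of `g = -λ₁ φ_{λ₁} + λ₂ φ_{λ₂}`; the same first-passage argument keeps `g > 0`, whence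
`φ_{λ₂} < φ_{λ₁}` off `0`. As `x ↦ x⁻² - 1` is decreasing on `[1, ∞)`, the integrand of `𝔐`
increases strictly with `λ`; it is bounded because `φ - 1 = O(y²)` and `|U y| ≥ c₀ |y|`.
The reflection `y ↦ -y`, `U ↦ -U(-·)` reduces all of this to `[0, 1]`.
-/

open MeasureTheory Set

/-- `𝔐(λ) = -(U'(0))² ∫_{-1}^1 U(y)⁻²(φ₁(y,λ)⁻² - 1) dy`, where `φ₁ lam` is the
regular solution of the homogeneous Rayleigh equation at spectral parameter `lam`. -/
noncomputable def Mfrak (U : ℝ → ℝ) (φ₁ : ℝ → ℝ → ℝ) (lam : ℝ) : ℝ :=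
  -(deriv U 0) ^ 2 * ∫ y in (-1:ℝ)..1, (((φ₁ lam y) ^ 2)⁻¹ - 1) / (U y) ^ 2

theorem forall_lt_of_first_passage {g : ℝ → ℝ} {a b c : ℝ} (hg : ContinuousOn g (Icc a b))
    (hstep : ∀ t ∈ Icc a b, (∀ y ∈ Ico a t, c < g y) → c < g t) :
    ∀ t ∈ Icc a b, c < g t := by
  by_contra! ⟨t, ht, hgt⟩
  set S := {t ∈ Icc a b | g t ≤ c}
  have hSbdd : BddBelow S := ⟨a, fun t ht => ht.1.1⟩
  have hinf : sInf S ∈ S := (hg.preimage_isClosed_of_isClosed isClosed_Icc isClosed_Iic).csInf_mem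
    ⟨t, ht, hgt⟩ hSbdd
  refine (hstep _ hinf.1 fun y hy => ?_).not_ge hinf.2
  by_contra! hy'
  exact (csInf_le hSbdd ⟨⟨hy.1, hy.2.le.trans hinf.1.2⟩, hy'⟩).not_gt hy.2

theorem forall_Icc_neg_one_one {p : ℝ → Prop} (hp : ∀ y ∈ Icc (0:ℝ) 1, p y)
    (hn : ∀ y ∈ Icc (0:ℝ) 1, p (-y)) : ∀ y ∈ Icc (-1:ℝ) 1, p y := by
  intro y hy
  rcases le_total 0 y with h | h
  · exact hp y ⟨h, hy.2⟩
  · simpa using hn (-y) ⟨neg_nonneg.2 h, neg_le.1 hy.1⟩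

theorem mapsTo_neg_Icc_zero_one : MapsTo (fun t : ℝ => -t) (Icc 0 1) (Icc (-1) 1) :=
  fun _ ht => ⟨neg_le_neg ht.2, (neg_nonpos.2 ht.1).trans zero_le_one⟩

theorem intervalIntegral.integral_nonneg_of_forall_Ioo {f : ℝ → ℝ} {a b : ℝ} (hab : a ≤ b)
    (hf : ∀ x ∈ Ioo a b, 0 ≤ f x) : 0 ≤ ∫ x in a..b, f x := by
  rw [intervalIntegral.integral_of_le hab, integral_Ioc_eq_integral_Ioo]
  exact setIntegral_nonneg measurableSet_Ioo hf

theorem intervalIntegral.integral_lt_integral_of_lt_of_ne {f g : ℝ → ℝ} {a b c : ℝ} (hab : a < b)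
    (hf : IntervalIntegrable f volume a b) (hg : IntervalIntegrable g volume a b)
    (hlt : ∀ x ∈ Icc a b, x ≠ c → f x < g x) : ∫ x in a..b, f x < ∫ x in a..b, g x := by
  have hae : ∀ᵐ x ∂volume.restrict (Ioc a b), f x < g x := by
    filter_upwards [ae_restrict_mem measurableSet_Ioc, ae_restrict_of_ae (Measure.ae_ne volume c)]
      with x hx hxc using hlt x (Ioc_subset_Icc_self hx) hxc
  refine integral_lt_integral_of_ae_le_of_measure_setOfPred_lt_ne_zero hab.le hf hg
    (hae.mono fun _ => le_of_lt) fun h0 => ?_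
  have hfalse : ∀ᵐ _ ∂volume.restrict (Ioc a b), False := by
    filter_upwards [hae, (ae_iff (p := fun x => ¬f x < g x)).2 (by simpa using h0)]
      with x hx hx' using hx' hx
  rw [Filter.eventually_false_iff_eq_bot, ae_eq_bot, Measure.restrict_eq_zero, Real.volume_Ioc,
    ENNReal.ofReal_eq_zero] at hfalse
  linarith

theorem intervalIntegrable_of_abs_le {f : ℝ → ℝ} {a b M : ℝ} (hab : a ≤ b)
    (hf : AEStronglyMeasurable f (volume.restrict (Icc a b))) (hM : ∀ x ∈ Icc a b, |f x| ≤ M) :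
    IntervalIntegrable f volume a b := by
  rw [intervalIntegrable_iff_integrableOn_Icc_of_le hab]
  exact IntegrableOn.of_bound measure_Icc_lt_top hf M
    ((ae_restrict_iff' measurableSet_Icc).2 (.of_forall hM))

noncomputable def rayleighFlux (V f : ℝ → ℝ) (w : ℝ) : ℝ :=
  (∫ z in (0:ℝ)..w, f z * V z ^ 2) / V w ^ 2

def IsRayleighSolution (V : ℝ → ℝ) (lam : ℝ) (f : ℝ → ℝ) (s : Set ℝ) : Prop :=
  ContinuousOn f s ∧ ∀ y ∈ s, f y = 1 - lam * ∫ w in (0:ℝ)..y, rayleighFlux V f w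

def IsHalfProfile (V : ℝ → ℝ) : Prop :=
  ContinuousOn V (Icc 0 1) ∧ MonotoneOn V (Icc 0 1) ∧ ∀ t ∈ Ioc 0 1, 0 < V t

section Flux

variable {V f : ℝ → ℝ}

theorem rayleighFlux_nonneg {w : ℝ} (hw : 0 ≤ w) (hf : ∀ z ∈ Icc 0 w, 0 ≤ f z) :
    0 ≤ rayleighFlux V f w :=
  div_nonneg (intervalIntegral.integral_nonneg hw fun z hz => mul_nonneg (hf z hz) (sq_nonneg _))
    (sq_nonneg _)

theorem integral_rayleighFlux_nonneg {t : ℝ} (ht : 0 ≤ t) (hf : ∀ z ∈ Ico 0 t, 0 ≤ f z) :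
    0 ≤ ∫ w in (0:ℝ)..t, rayleighFlux V f w :=
  intervalIntegral.integral_nonneg_of_forall_Ioo ht fun _ hw =>
    rayleighFlux_nonneg hw.1.le fun z hz => hf z ⟨hz.1, hz.2.trans_lt hw.2⟩

theorem abs_rayleighFlux_le {M w : ℝ} (hVmono : MonotoneOn V (Icc 0 1))
    (hVpos : ∀ t ∈ Ioc 0 1, 0 < V t) (hM : ∀ z ∈ Icc 0 1, |f z| ≤ M) (hw : w ∈ Icc 0 1) :
    |rayleighFlux V f w| ≤ M * w := by
  rcases hw.1.eq_or_lt with rfl | hw0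
  · simp [rayleighFlux]
  have hVw : 0 < V w ^ 2 := pow_pos (hVpos w ⟨hw0, hw.2⟩) 2
  have hint : |∫ z in (0:ℝ)..w, f z * V z ^ 2| ≤ M * V w ^ 2 * |w - 0| := by
    refine intervalIntegral.norm_integral_le_of_norm_le_const (f := fun z => f z * V z ^ 2)
      fun z hz => ?_
    rw [uIoc_of_le hw.1] at hz
    have hz1 : z ∈ Icc (0:ℝ) 1 := ⟨hz.1.le, hz.2.trans hw.2⟩
    have hVz : 0 ≤ V z := (hVpos z ⟨hz.1, hz1.2⟩).le
    rw [Real.norm_eq_abs, abs_mul, abs_of_nonneg (sq_nonneg (V z))]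
    exact mul_le_mul (hM z hz1) (pow_le_pow_left₀ hVz (hVmono hz1 hw hz.2) 2) (sq_nonneg _)
      ((abs_nonneg _).trans (hM z hz1))
  rw [rayleighFlux, abs_div, abs_of_pos hVw, div_le_iff₀ hVw]
  rw [sub_zero, abs_of_pos hw0] at hint
  linarith

theorem intervalIntegrable_mul_sq (hVc : ContinuousOn V (Icc 0 1))
    (hf : ContinuousOn f (Icc 0 1)) {w : ℝ} (hw : w ∈ Icc 0 1) :
    IntervalIntegrable (fun z => f z * V z ^ 2) volume 0 w :=
  ((hf.mul (hVc.pow 2)).mono (Icc_subset_Icc_right hw.2)).intervalIntegrable_of_Icc hw.1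

theorem rayleighFlux_linear_comb {f₁ f₂ : ℝ → ℝ} (a b : ℝ) {w : ℝ}
    (h₁ : IntervalIntegrable (fun z => f₁ z * V z ^ 2) volume 0 w)
    (h₂ : IntervalIntegrable (fun z => f₂ z * V z ^ 2) volume 0 w) :
    rayleighFlux V (fun z => a * f₁ z + b * f₂ z) w =
      a * rayleighFlux V f₁ w + b * rayleighFlux V f₂ w := by
  have hsplit : (fun z => (a * f₁ z + b * f₂ z) * V z ^ 2) =
      fun z => a * (f₁ z * V z ^ 2) + b * (f₂ z * V z ^ 2) := by
    ext z; ring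
  rw [rayleighFlux, hsplit, intervalIntegral.integral_add (h₁.const_mul a) (h₂.const_mul b),
    intervalIntegral.integral_const_mul, intervalIntegral.integral_const_mul, add_div,
    mul_div_assoc, mul_div_assoc, rayleighFlux, rayleighFlux]

theorem intervalIntegrable_rayleighFlux (hV : IsHalfProfile V) (hf : ContinuousOn f (Icc 0 1))
    {y : ℝ} (hy : y ∈ Icc 0 1) : IntervalIntegrable (rayleighFlux V f) volume 0 y := by
  obtain ⟨M, hM⟩ := isCompact_Icc.exists_bound_of_continuousOn hf
  have hM0 : 0 ≤ M := (norm_nonneg _).trans (hM 0 ⟨le_rfl, zero_le_one⟩)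
  have hsub : Icc 0 y ⊆ Icc 0 1 := Icc_subset_Icc_right hy.2
  have hF : ContinuousOn (fun w => ∫ z in (0:ℝ)..w, f z * V z ^ 2) (uIcc 0 1) :=
    intervalIntegral.continuousOn_primitive_interval
      ((hf.mul (hV.1.pow 2)).integrableOn_Icc.mono_set (uIcc_of_le zero_le_one).subset)
  rw [uIcc_of_le zero_le_one] at hF
  refine intervalIntegrable_of_abs_le hy.1 ?_ fun w hw =>
    (abs_rayleighFlux_le hV.2.1 hV.2.2 hM (hsub hw)).trans
      (mul_le_of_le_one_right hM0 (hsub hw).2)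
  exact ((hF.mono hsub).aestronglyMeasurable measurableSet_Icc).aemeasurable.div
    (((hV.1.pow 2).mono hsub).aestronglyMeasurable measurableSet_Icc).aemeasurable
    |>.aestronglyMeasurable

theorem integral_rayleighFlux_pos (hV : IsHalfProfile V) (hf : ContinuousOn f (Icc 0 1))
    (hfpos : ∀ z ∈ Icc 0 1, 0 < f z) {y : ℝ} (hy : y ∈ Ioc 0 1) :
    0 < ∫ w in (0:ℝ)..y, rayleighFlux V f w := by
  refine intervalIntegral.intervalIntegral_pos_of_pos_on
    (intervalIntegrable_rayleighFlux hV hf (Ioc_subset_Icc_self hy)) (fun w hw => ?_) hy.1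
  have hw1 : w ∈ Ioc (0:ℝ) 1 := ⟨hw.1, hw.2.le.trans hy.2⟩
  refine div_pos (intervalIntegral.intervalIntegral_pos_of_pos_on
    (intervalIntegrable_mul_sq hV.1 hf (Ioc_subset_Icc_self hw1)) (fun z hz => ?_) hw.1)
    (pow_pos (hV.2.2 w hw1) 2)
  have hz1 : z ∈ Ioc (0:ℝ) 1 := ⟨hz.1, hz.2.le.trans hw1.2⟩
  exact mul_pos (hfpos z (Ioc_subset_Icc_self hz1)) (pow_pos (hV.2.2 z hz1) 2)

end Flux

section HalfInterval

variable {V : ℝ → ℝ}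

theorem IsRayleighSolution.one_le {lam : ℝ} {f : ℝ → ℝ} (hlam : lam ≤ 0)
    (hsol : IsRayleighSolution V lam f (Icc 0 1)) : ∀ y ∈ Icc (0:ℝ) 1, 1 ≤ f y := by
  have hstep : ∀ t ∈ Icc (0:ℝ) 1, (∀ y ∈ Ico 0 t, 0 < f y) → 1 ≤ f t := fun t ht hpos => by
    rw [hsol.2 t ht, le_sub_self_iff]
    exact mul_nonpos_of_nonpos_of_nonneg hlam
      (integral_rayleighFlux_nonneg ht.1 fun z hz => (hpos z hz).le)
  have hpos := forall_lt_of_first_passage hsol.1 fun t ht h => one_pos.trans_le (hstep t ht h)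
  exact fun t ht => hstep t ht fun y hy => hpos y ⟨hy.1, hy.2.le.trans ht.2⟩

theorem IsRayleighSolution.abs_sub_one_le {lam M : ℝ} {f : ℝ → ℝ}
    (hVmono : MonotoneOn V (Icc 0 1)) (hVpos : ∀ t ∈ Ioc 0 1, 0 < V t)
    (hsol : IsRayleighSolution V lam f (Icc 0 1)) (hM : ∀ z ∈ Icc 0 1, |f z| ≤ M) {y : ℝ}
    (hy : y ∈ Icc 0 1) : |f y - 1| ≤ |lam| * M * y ^ 2 := by
  have hM0 : 0 ≤ M := (abs_nonneg _).trans (hM 0 ⟨le_rfl, zero_le_one⟩)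
  have hI : ‖∫ w in (0:ℝ)..y, rayleighFlux V f w‖ ≤ M * y * |y - 0| := by
    refine intervalIntegral.norm_integral_le_of_norm_le_const fun w hw => ?_
    rw [uIoc_of_le hy.1] at hw
    exact (abs_rayleighFlux_le hVmono hVpos hM ⟨hw.1.le, hw.2.trans hy.2⟩).trans
      (mul_le_mul_of_nonneg_left hw.2 hM0)
  rw [Real.norm_eq_abs, sub_zero, abs_of_nonneg hy.1] at hI
  rw [hsol.2 y hy, sub_sub_cancel_left, abs_neg, abs_mul]
  calc |lam| * |∫ w in (0:ℝ)..y, rayleighFlux V f w| ≤ |lam| * (M * y * y) :=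
        mul_le_mul_of_nonneg_left hI (abs_nonneg _)
    _ = |lam| * M * y ^ 2 := by ring

theorem IsRayleighSolution.lt_of_lt {lam₁ lam₂ : ℝ} {f₁ f₂ : ℝ → ℝ} (hV : IsHalfProfile V)
    (h12 : lam₁ < lam₂) (hlam₂ : lam₂ ≤ 0) (h₁ : IsRayleighSolution V lam₁ f₁ (Icc 0 1))
    (h₂ : IsRayleighSolution V lam₂ f₂ (Icc 0 1)) : ∀ y ∈ Ioc (0:ℝ) 1, f₂ y < f₁ y := by
  set g : ℝ → ℝ := fun z => -lam₁ * f₁ z + lam₂ * f₂ z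
  have hg : ContinuousOn g (Icc 0 1) :=
    (continuousOn_const.mul h₁.1).add (continuousOn_const.mul h₂.1)
  have hdiff : ∀ y ∈ Icc (0:ℝ) 1, f₁ y - f₂ y = ∫ w in (0:ℝ)..y, rayleighFlux V g w := by
    intro y hy
    have hsub : uIcc 0 y ⊆ Icc 0 1 := by rw [uIcc_of_le hy.1]; exact Icc_subset_Icc_right hy.2
    rw [intervalIntegral.integral_congr fun w hw => rayleighFlux_linear_comb (-lam₁) lam₂
        (intervalIntegrable_mul_sq hV.1 h₁.1 (hsub hw))
        (intervalIntegrable_mul_sq hV.1 h₂.1 (hsub hw)),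
      intervalIntegral.integral_add ((intervalIntegrable_rayleighFlux hV h₁.1 hy).const_mul _)
        ((intervalIntegrable_rayleighFlux hV h₂.1 hy).const_mul _),
      intervalIntegral.integral_const_mul, intervalIntegral.integral_const_mul,
      h₁.2 y hy, h₂.2 y hy]
    ring
  -- `g = (lam₂ - lam₁) f₁ + (-lam₂)(f₁ - f₂)` stays positive as long as `f₂ ≤ f₁`.
  have hgpos := forall_lt_of_first_passage hg fun t ht hpos => by
    have hψ : 0 ≤ f₁ t - f₂ t :=
      hdiff t ht ▸ integral_rayleighFlux_nonneg ht.1 fun z hz => (hpos z hz).le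
    have h1 := h₁.one_le (h12.le.trans hlam₂) t ht
    show 0 < -lam₁ * f₁ t + lam₂ * f₂ t
    nlinarith
  intro y hy
  linarith [hdiff y (Ioc_subset_Icc_self hy), integral_rayleighFlux_pos hV hg hgpos hy]

end HalfInterval

section Reflection

variable {U f : ℝ → ℝ}

theorem rayleighFlux_comp_neg (w : ℝ) :
    rayleighFlux (fun t => -U (-t)) (fun t => f (-t)) w = -rayleighFlux U f (-w) := by
  simp only [rayleighFlux, neg_sq]
  rw [intervalIntegral.integral_comp_neg (fun z => f z * U z ^ 2), neg_zero,
    intervalIntegral.integral_symm, neg_div]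

theorem integral_rayleighFlux_comp_neg (y : ℝ) :
    ∫ w in (0:ℝ)..y, rayleighFlux (fun t => -U (-t)) (fun t => f (-t)) w =
      ∫ w in (0:ℝ)..(-y), rayleighFlux U f w := by
  simp only [rayleighFlux_comp_neg, intervalIntegral.integral_neg]
  rw [intervalIntegral.integral_comp_neg (rayleighFlux U f), neg_zero,
    intervalIntegral.integral_symm, neg_neg]

theorem IsRayleighSolution.mono {lam : ℝ} {s t : Set ℝ} (h : IsRayleighSolution U lam f s)
    (hts : t ⊆ s) : IsRayleighSolution U lam f t :=
  ⟨h.1.mono hts, fun y hy => h.2 y (hts hy)⟩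

theorem IsRayleighSolution.comp_neg {lam : ℝ} (h : IsRayleighSolution U lam f (Icc (-1) 1)) :
    IsRayleighSolution (fun t => -U (-t)) lam (fun t => f (-t)) (Icc 0 1) := by
  refine ⟨h.1.comp continuous_neg.continuousOn mapsTo_neg_Icc_zero_one, fun y hy => ?_⟩
  rw [integral_rayleighFlux_comp_neg]
  exact h.2 (-y) (mapsTo_neg_Icc_zero_one hy)

end Reflection

section Profile

variable {U : ℝ → ℝ} {c₀ : ℝ}

theorem isHalfProfile_of_slope {V : ℝ → ℝ} (hc₀ : 0 < c₀) (hV0 : V 0 = 0)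
    (hVc : ContinuousOn V (Icc 0 1))
    (hslope : ∀ x ∈ Icc (0:ℝ) 1, ∀ y ∈ Icc (0:ℝ) 1, x ≤ y → c₀ * (y - x) ≤ V y - V x) :
    IsHalfProfile V :=
  ⟨hVc, fun x hx y hy hxy => by
    nlinarith [hslope x hx y hy hxy, mul_nonneg hc₀.le (sub_nonneg.2 hxy)], fun t ht => by
    nlinarith [hslope 0 ⟨le_rfl, zero_le_one⟩ t (Ioc_subset_Icc_self ht) ht.1.le, mul_pos hc₀ ht.1]⟩

theorem isHalfProfile_and_comp_neg_of_slope (hc₀ : 0 < c₀) (hU0 : U 0 = 0)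
    (hUc : ContinuousOn U (Icc (-1) 1))
    (hslope : ∀ x ∈ Icc (-1:ℝ) 1, ∀ y ∈ Icc (-1:ℝ) 1, x ≤ y → c₀ * (y - x) ≤ U y - U x) :
    IsHalfProfile U ∧ IsHalfProfile fun t => -U (-t) := by
  have hsub : Icc (0:ℝ) 1 ⊆ Icc (-1) 1 := Icc_subset_Icc_left (by norm_num)
  refine ⟨isHalfProfile_of_slope hc₀ hU0 (hUc.mono hsub)
      fun x hx y hy => hslope x (hsub hx) y (hsub hy),
    isHalfProfile_of_slope hc₀ (by simp [hU0])
      (hUc.comp continuous_neg.continuousOn mapsTo_neg_Icc_zero_one).neg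
      fun x hx y hy hxy => ?_⟩
  linarith [hslope (-y) (mapsTo_neg_Icc_zero_one hy) (-x) (mapsTo_neg_Icc_zero_one hx)
    (neg_le_neg hxy)]

theorem mul_abs_le_abs_of_slope (hU0 : U 0 = 0)
    (hslope : ∀ x ∈ Icc (-1:ℝ) 1, ∀ y ∈ Icc (-1:ℝ) 1, x ≤ y → c₀ * (y - x) ≤ U y - U x) :
    ∀ y ∈ Icc (-1:ℝ) 1, c₀ * |y| ≤ |U y| := by
  have h0 : (0:ℝ) ∈ Icc (-1) 1 := ⟨by norm_num, zero_le_one⟩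
  refine forall_Icc_neg_one_one (fun y hy => ?_) fun y hy => ?_
  · have := hslope 0 h0 y (Icc_subset_Icc_left (by norm_num) hy) hy.1
    rw [abs_of_nonneg hy.1]
    linarith [le_abs_self (U y)]
  · have := hslope (-y) (mapsTo_neg_Icc_zero_one hy) 0 h0 (neg_nonpos.2 hy.1)
    rw [abs_neg, abs_of_nonneg hy.1]
    linarith [neg_le_abs (U (-y))]

end Profile

section FullInterval

variable {U : ℝ → ℝ}

theorem IsRayleighSolution.one_le_Icc_neg_one_one {lam : ℝ} {f : ℝ → ℝ} (hlam : lam ≤ 0)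
    (h : IsRayleighSolution U lam f (Icc (-1) 1)) : ∀ y ∈ Icc (-1:ℝ) 1, 1 ≤ f y :=
  forall_Icc_neg_one_one ((h.mono (Icc_subset_Icc_left (by norm_num))).one_le hlam)
    (h.comp_neg.one_le hlam)

theorem IsRayleighSolution.exists_abs_sub_one_le {lam : ℝ} {f : ℝ → ℝ} (hU : IsHalfProfile U)
    (hŬ : IsHalfProfile fun t => -U (-t)) (h : IsRayleighSolution U lam f (Icc (-1) 1)) :
    ∃ K, ∀ y ∈ Icc (-1:ℝ) 1, |f y - 1| ≤ K * y ^ 2 := by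
  obtain ⟨M, hM⟩ := isCompact_Icc.exists_bound_of_continuousOn h.1
  have hsub : Icc (0:ℝ) 1 ⊆ Icc (-1) 1 := Icc_subset_Icc_left (by norm_num)
  refine ⟨|lam| * M, forall_Icc_neg_one_one (fun y hy => ?_) fun y hy => ?_⟩
  · exact (h.mono hsub).abs_sub_one_le hU.2.1 hU.2.2 (fun z hz => hM z (hsub hz)) hy
  · simpa only [neg_sq] using h.comp_neg.abs_sub_one_le hŬ.2.1 hŬ.2.2
      (fun z hz => hM (-z) (mapsTo_neg_Icc_zero_one hz)) hy

theorem IsRayleighSolution.lt_of_lt_Icc_neg_one_one {lam₁ lam₂ : ℝ} {f₁ f₂ : ℝ → ℝ}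
    (hU : IsHalfProfile U) (hŬ : IsHalfProfile fun t => -U (-t)) (h12 : lam₁ < lam₂)
    (hlam₂ : lam₂ ≤ 0) (h₁ : IsRayleighSolution U lam₁ f₁ (Icc (-1) 1))
    (h₂ : IsRayleighSolution U lam₂ f₂ (Icc (-1) 1)) :
    ∀ y ∈ Icc (-1:ℝ) 1, y ≠ 0 → f₂ y < f₁ y := by
  have hsub : Icc (0:ℝ) 1 ⊆ Icc (-1) 1 := Icc_subset_Icc_left (by norm_num)
  refine forall_Icc_neg_one_one (fun y hy hy0 => ?_) fun y hy hy0 => ?_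
  · exact (h₁.mono hsub).lt_of_lt hU h12 hlam₂ (h₂.mono hsub) y ⟨hy.1.lt_of_ne' hy0, hy.2⟩
  · exact h₁.comp_neg.lt_of_lt hŬ h12 hlam₂ h₂.comp_neg y
      ⟨hy.1.lt_of_ne' (neg_ne_zero.1 hy0), hy.2⟩

end FullInterval

theorem abs_inv_sq_sub_one_le {x : ℝ} (h : 1 ≤ x) : |(x ^ 2)⁻¹ - 1| ≤ 2 * |x - 1| := by
  rw [abs_of_nonpos (sub_nonpos.2 (inv_le_one_of_one_le₀ (one_le_pow₀ h))),
    abs_of_nonneg (sub_nonneg.2 h), neg_sub, sub_le_iff_le_add, ← sub_le_iff_le_add',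
    inv_eq_one_div, le_div_iff₀ (by positivity)]
  nlinarith [mul_nonneg (sq_nonneg (x - 1)) (by linarith : (0:ℝ) ≤ 2 * x + 1)]

theorem inv_sq_sub_one_div_sq_lt {x₁ x₂ u : ℝ} (hu : u ≠ 0) (h1 : 1 ≤ x₂) (h : x₂ < x₁) :
    ((x₁ ^ 2)⁻¹ - 1) / u ^ 2 < ((x₂ ^ 2)⁻¹ - 1) / u ^ 2 :=
  div_lt_div_of_pos_right (sub_lt_sub_right (inv_strictAnti₀ (by positivity)
    (pow_lt_pow_left₀ h (by linarith) two_ne_zero)) 1) (by positivity)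

theorem intervalIntegrable_inv_sq_sub_one_div_sq {U f : ℝ → ℝ} {c₀ K : ℝ} (hc₀ : 0 < c₀)
    (hUc : Continuous U) (hU : ∀ y ∈ Icc (-1:ℝ) 1, c₀ * |y| ≤ |U y|)
    (hf : ContinuousOn f (Icc (-1) 1)) (hf1 : ∀ y ∈ Icc (-1:ℝ) 1, 1 ≤ f y)
    (hK : ∀ y ∈ Icc (-1:ℝ) 1, |f y - 1| ≤ K * y ^ 2) :
    IntervalIntegrable (fun y => ((f y ^ 2)⁻¹ - 1) / U y ^ 2) volume (-1) 1 := by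
  have hK0 : 0 ≤ K := by simpa using (abs_nonneg _).trans (hK 1 ⟨by norm_num, le_rfl⟩)
  have hmeas := (hf.aestronglyMeasurable (μ := volume) measurableSet_Icc).aemeasurable
  refine intervalIntegrable_of_abs_le (M := 2 * K / c₀ ^ 2) (by norm_num)
    (((hmeas.pow_const 2).inv.sub_const 1).div (hUc.measurable.pow_const 2).aemeasurable
      ).aestronglyMeasurable fun y hy => ?_
  rcases eq_or_ne y 0 with rfl | hy0
  · have hf0 : f 0 = 1 := by simpa [sub_eq_zero] using hK 0 hy
    simp only [hf0, one_pow, inv_one, sub_self, zero_div, abs_zero]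
    positivity
  have hU2 : c₀ ^ 2 * y ^ 2 ≤ U y ^ 2 := by
    simpa only [mul_pow, sq_abs] using pow_le_pow_left₀ (by positivity) (hU y hy) 2
  rw [abs_div, abs_of_nonneg (sq_nonneg (U y))]
  calc |(f y ^ 2)⁻¹ - 1| / U y ^ 2 ≤ 2 * K * y ^ 2 / (c₀ ^ 2 * y ^ 2) := by
        refine div_le_div₀ (by positivity) ?_ (by positivity) hU2
        linarith [abs_inv_sq_sub_one_le (hf1 y hy), hK y hy]
    _ = 2 * K / c₀ ^ 2 := by field_simp

theorem statement4_general
    (U : ℝ → ℝ) (c₀ : ℝ) (hc₀ : 0 < c₀)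
    (hUreg : ContDiff ℝ 4 U)
    (hU' : ∀ y ∈ Icc (-1:ℝ) 1, c₀ ≤ deriv U y)
    (hU0 : U 0 = 0)
    (φ₁ : ℝ → ℝ → ℝ)
    (hφ₁ : ∀ lam : ℝ, lam < 0 →
      ContinuousOn (φ₁ lam) (Icc (-1:ℝ) 1) ∧
      ∀ y ∈ Icc (-1:ℝ) 1, φ₁ lam y = 1 - lam * ∫ w in (0:ℝ)..y,
        (∫ z in (0:ℝ)..w, φ₁ lam z * (U z) ^ 2) / (U w) ^ 2) :
    ∀ lam₁ lam₂ : ℝ, lam₁ < lam₂ → lam₂ < 0 →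
      Mfrak U φ₁ lam₂ < Mfrak U φ₁ lam₁ := by
  intro lam₁ lam₂ h12 hlam₂
  have hUd : Differentiable ℝ U := hUreg.differentiable (by norm_num)
  have hslope := (convex_Icc (-1:ℝ) 1).mul_sub_le_image_sub_of_le_deriv
    hUd.continuous.continuousOn hUd.differentiableOn fun x hx => hU' x (interior_subset hx)
  obtain ⟨hU, hŬ⟩ := isHalfProfile_and_comp_neg_of_slope hc₀ hU0 hUd.continuous.continuousOn hslope
  have hUabs := mul_abs_le_abs_of_slope hU0 hslope
  have hsol : ∀ lam < 0, IsRayleighSolution U lam (φ₁ lam) (Icc (-1) 1) := hφ₁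
  have hint : ∀ lam < 0, IntervalIntegrable
      (fun y => ((φ₁ lam y ^ 2)⁻¹ - 1) / U y ^ 2) volume (-1) 1 := fun lam hlam => by
    obtain ⟨K, hK⟩ := (hsol lam hlam).exists_abs_sub_one_le hU hŬ
    exact intervalIntegrable_inv_sq_sub_one_div_sq hc₀ hUd.continuous hUabs (hsol lam hlam).1
      ((hsol lam hlam).one_le_Icc_neg_one_one hlam.le) hK
  have hI := intervalIntegral.integral_lt_integral_of_lt_of_ne (c := 0) (by norm_num)
    (hint lam₁ (h12.trans hlam₂)) (hint lam₂ hlam₂) fun y hy hy0 =>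
      inv_sq_sub_one_div_sq_lt (abs_pos.1 ((mul_pos hc₀ (abs_pos.2 hy0)).trans_le (hUabs y hy)))
        ((hsol lam₂ hlam₂).one_le_Icc_neg_one_one hlam₂.le y hy)
        ((hsol lam₁ (h12.trans hlam₂)).lt_of_lt_Icc_neg_one_one hU hŬ h12 hlam₂.le
          (hsol lam₂ hlam₂) y hy hy0)
  have hd : 0 < deriv U 0 ^ 2 := pow_pos (hc₀.trans_le (hU' 0 ⟨by norm_num, by norm_num⟩)) 2
  simp only [Mfrak, neg_mul]
  exact neg_lt_neg (mul_lt_mul_of_pos_left hI hd)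

/-- the function `𝔐` is strictly decreasing on `(-∞,0)`. -/
theorem statement4
    (U : ℝ → ℝ) (c₀ C : ℝ) (hc₀ : 0 < c₀) (hC : 0 < C)
    (hUreg : ContDiff ℝ 4 U)
    (hU' : ∀ y ∈ Icc (-1:ℝ) 1, c₀ ≤ deriv U y)
    (hU0 : U 0 = 0) (hU''0 : deriv (deriv U) 0 = 0)
    (hUQ : ∀ y ∈ Icc (-1:ℝ) 1, y ≠ 0 →
      -C ≤ deriv (deriv U) y / U y ∧ deriv (deriv U) y / U y ≤ 0)
    (φ₁ : ℝ → ℝ → ℝ)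
    (hφ₁ : ∀ lam : ℝ, lam < 0 →
      ContinuousOn (φ₁ lam) (Icc (-1:ℝ) 1) ∧
      ∀ y ∈ Icc (-1:ℝ) 1, φ₁ lam y = 1 - lam * ∫ w in (0:ℝ)..y,
        (∫ z in (0:ℝ)..w, φ₁ lam z * (U z) ^ 2) / (U w) ^ 2) :
    ∀ lam₁ lam₂ : ℝ, lam₁ < lam₂ → lam₂ < 0 →
      Mfrak U φ₁ lam₂ < Mfrak U φ₁ lam₁ :=
  statement4_general U c₀ hc₀ hUreg hU' hU0 φ₁ hφ₁
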